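/- Let V ∈ R^{k×k} be invertible and R the matrix whose j-th column is Ve_j/‖Ve_j‖₂. Then ‖R‖₂ ≤ κ(V), ‖R^{-1}‖₂ ≤ κ(V), and κ(R) ≤ κ(V)², where κ is the spectral condition number. -/

import Mathlib

/-! Write `R = V D⁻¹` with `D = diag ‖V e_j‖`. Each column norm `‖V e_j‖` is the stretch of the
unit vector `e_j`, hence lies in `[σ_k(V), σ_1(V)]`; so `D⁻¹` scales coordinates by factors in
`[σ_1⁻¹, σ_k⁻¹]` and `D` by at most `σ_1`. Therefore `‖R‖ ≤ σ_1 / σ_k`, `σ_k(R) ≥ σ_k / σ_1`, and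
`R⁻¹ = D V⁻¹` has norm at most `σ_1 · σ_k⁻¹`; `κ(R) ≤ κ(V)²` is the quotient of the first two
bounds. -/

/-- Euclidean norm of a vector in `ℝ^n`. -/
noncomputable def vnorm {n : ℕ} (v : Fin n → ℝ) : ℝ := Real.sqrt (∑ i, v i ^ 2)

/-- The `j`-th largest singular value (1-indexed) of a real `m × n` matrix, via the
Courant–Fischer max-min characterization.  In particular `sval A 1` is the spectral
norm `‖A‖₂` and `sval A k` is `σ_k(A)`. -/
noncomputable def sval {m n : ℕ} (A : Matrix (Fin m) (Fin n) ℝ) (j : ℕ) : ℝ :=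
  sSup {c : ℝ | 0 ≤ c ∧ ∃ W : Submodule ℝ (Fin n → ℝ), Module.finrank ℝ W = j ∧
    ∀ v ∈ W, c * vnorm v ≤ vnorm (A.mulVec v)}

/-- `U` is an `m × k` matrix of orthonormal columns spanning a top-`k` left singular
subspace of `A`: its columns are orthonormal eigenvectors of `A Aᵀ` whose eigenvalues
are (at least) `σ_k(A)²`, i.e. belong to the `k` largest. -/
def IsTopSingular {m n k : ℕ} (A : Matrix (Fin m) (Fin n) ℝ)
    (U : Matrix (Fin m) (Fin k) ℝ) : Prop :=
  U.transpose * U = 1 ∧ ∃ D : Fin k → ℝ,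
    A * A.transpose * U = U * Matrix.diagonal D ∧ ∀ j, sval A k ^ 2 ≤ D j

open Matrix

variable {m n : ℕ}

lemma vnorm_eq_norm_toLp (v : Fin n → ℝ) : vnorm v = ‖WithLp.toLp 2 v‖ := by
  simp [vnorm, EuclideanSpace.norm_eq]

lemma vnorm_nonneg (v : Fin n → ℝ) : 0 ≤ vnorm v := Real.sqrt_nonneg _

lemma vnorm_pos {v : Fin n → ℝ} (hv : v ≠ 0) : 0 < vnorm v := by
  simpa [vnorm_eq_norm_toLp] using hv

lemma vnorm_smul (t : ℝ) (v : Fin n → ℝ) : vnorm (t • v) = |t| * vnorm v := by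
  rw [vnorm_eq_norm_toLp, vnorm_eq_norm_toLp, WithLp.toLp_smul, norm_smul, Real.norm_eq_abs]

lemma vnorm_single (j : Fin n) : vnorm (Pi.single j 1) = 1 := by
  simp [vnorm_eq_norm_toLp]

lemma vnorm_le_vnorm_of_abs_le {u w : Fin n → ℝ} (h : ∀ j, |u j| ≤ |w j|) : vnorm u ≤ vnorm w :=
  Real.sqrt_le_sqrt <| Finset.sum_le_sum fun j _ => sq_le_sq.mpr (h j)

lemma vnorm_mul_le {d : Fin n → ℝ} {t : ℝ} (ht : 0 ≤ t) (hd : ∀ j, |d j| ≤ t) (u : Fin n → ℝ) :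
    vnorm (d * u) ≤ t * vnorm u := by
  calc vnorm (d * u) ≤ vnorm (t • u) := vnorm_le_vnorm_of_abs_le fun j => by
        simp only [Pi.mul_apply, Pi.smul_apply, smul_eq_mul, abs_mul, abs_of_nonneg ht]
        exact mul_le_mul_of_nonneg_right (hd j) (abs_nonneg _)
  _ = t * vnorm u := by rw [vnorm_smul, abs_of_nonneg ht]

lemma mul_vnorm_le {d : Fin n → ℝ} {s : ℝ} (hs : 0 ≤ s) (hd : ∀ j, s ≤ |d j|) (u : Fin n → ℝ) :
    s * vnorm u ≤ vnorm (d * u) := by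
  calc s * vnorm u = vnorm (s • u) := by rw [vnorm_smul, abs_of_nonneg hs]
  _ ≤ vnorm (d * u) := vnorm_le_vnorm_of_abs_le fun j => by
        simp only [Pi.mul_apply, Pi.smul_apply, smul_eq_mul, abs_mul, abs_of_nonneg hs]
        exact mul_le_mul_of_nonneg_right (hd j) (abs_nonneg _)

lemma exists_vnorm_mulVec_le (A : Matrix (Fin m) (Fin n) ℝ) :
    ∃ C > 0, ∀ v, vnorm (A *ᵥ v) ≤ C * vnorm v := by
  set T := LinearMap.toContinuousLinearMap (Matrix.toEuclideanLin A)
  refine ⟨‖T‖ + 1, by positivity, fun v => ?_⟩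
  have hT : T (WithLp.toLp 2 v) = WithLp.toLp 2 (A *ᵥ v) := by
    simp [T]
  rw [vnorm_eq_norm_toLp, vnorm_eq_norm_toLp, ← hT]
  exact (T.le_opNorm _).trans (by gcongr; linarith)

lemma le_sval {A : Matrix (Fin m) (Fin n) ℝ} {j : ℕ} (hj : j ≠ 0) {c : ℝ} (hc : 0 ≤ c)
    (W : Submodule ℝ (Fin n → ℝ)) (hW : Module.finrank ℝ W = j)
    (hcW : ∀ v ∈ W, c * vnorm v ≤ vnorm (A *ᵥ v)) : c ≤ sval A j := by
  obtain ⟨C, -, hC⟩ := exists_vnorm_mulVec_le A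
  refine le_csSup ⟨C, ?_⟩ ⟨hc, W, hW, hcW⟩
  rintro c' ⟨-, W', hW', hcW'⟩
  obtain ⟨v, hvW', hv⟩ := Submodule.exists_mem_ne_zero_of_ne_bot (p := W') (by
    rintro rfl
    exact hj (hW'.symm.trans (finrank_bot ℝ _)))
  exact le_of_mul_le_mul_right ((hcW' v hvW').trans (hC v)) (vnorm_pos hv)

lemma sval_eq_zero_of_lt (A : Matrix (Fin m) (Fin n) ℝ) {j : ℕ} (hj : n < j) : sval A j = 0 := by
  unfold sval
  convert Real.sSup_empty
  refine Set.eq_empty_of_forall_notMem ?_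
  rintro c ⟨-, W, hW, -⟩
  have := W.finrank_le
  rw [Module.finrank_fin_fun] at this
  omega

lemma sval_one_le (A : Matrix (Fin m) (Fin n) ℝ) {M : ℝ} (hM : 0 ≤ M)
    (hAM : ∀ v, vnorm (A *ᵥ v) ≤ M * vnorm v) : sval A 1 ≤ M := by
  refine Real.sSup_le ?_ hM
  rintro c ⟨-, W, hW, hcW⟩
  obtain ⟨v, hvW, hv⟩ := Submodule.exists_mem_ne_zero_of_ne_bot (p := W) (by
    rintro rfl
    simp at hW)
  exact le_of_mul_le_mul_right ((hcW v hvW).trans (hAM v)) (vnorm_pos hv)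

lemma vnorm_mulVec_le_sval_one (A : Matrix (Fin m) (Fin n) ℝ) (w : Fin n → ℝ) :
    vnorm (A *ᵥ w) ≤ sval A 1 * vnorm w := by
  rcases eq_or_ne w 0 with rfl | hw
  · simp [vnorm]
  have hwpos := vnorm_pos hw
  have hle : vnorm (A *ᵥ w) / vnorm w ≤ sval A 1 := by
    refine le_sval one_ne_zero (div_nonneg (vnorm_nonneg _) hwpos.le) _ (finrank_span_singleton hw) fun v hv => ?_
    obtain ⟨t, rfl⟩ := Submodule.mem_span_singleton.mp hv
    rw [mulVec_smul, vnorm_smul, vnorm_smul]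
    field_simp
    rfl
  rwa [div_le_iff₀ hwpos] at hle

lemma sval_mul_vnorm_le (A : Matrix (Fin m) (Fin n) ℝ) (w : Fin n → ℝ) :
    sval A n * vnorm w ≤ vnorm (A *ᵥ w) := by
  rcases eq_or_ne w 0 with rfl | hw
  · simp [vnorm]
  have hwpos := vnorm_pos hw
  rw [← le_div_iff₀ hwpos]
  refine csSup_le ⟨0, le_rfl, ⊤, by simp, fun v _ => by simpa using vnorm_nonneg _⟩ ?_
  rintro c ⟨-, W, hW, hcW⟩
  have hWtop : W = ⊤ := Submodule.eq_top_of_finrank_eq (by simpa using hW)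
  rw [le_div_iff₀ hwpos]
  exact hcW w (hWtop ▸ Submodule.mem_top)

lemma le_sval_of_forall (hn : n ≠ 0) (A : Matrix (Fin m) (Fin n) ℝ) {c : ℝ} (hc : 0 ≤ c)
    (hcA : ∀ v, c * vnorm v ≤ vnorm (A *ᵥ v)) : c ≤ sval A n :=
  le_sval hn hc ⊤ (by simp) fun v _ => hcA v

lemma sval_pos_of_isUnit (hn : n ≠ 0) {V : Matrix (Fin n) (Fin n) ℝ} (hV : IsUnit V) :
    0 < sval V n := by
  obtain ⟨C, hC, hCV⟩ := exists_vnorm_mulVec_le V⁻¹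
  refine (inv_pos.mpr hC).trans_le (le_sval_of_forall hn V (inv_pos.mpr hC).le fun v => ?_)
  have := hCV (V *ᵥ v)
  rw [mulVec_mulVec, nonsing_inv_mul V ((isUnit_iff_isUnit_det V).mp hV), one_mulVec] at this
  rwa [inv_mul_le_iff₀ hC]

lemma sval_nonneg (A : Matrix (Fin m) (Fin n) ℝ) (j : ℕ) : 0 ≤ sval A j :=
  Real.sSup_nonneg fun _ hc => hc.1

noncomputable def colNorm (A : Matrix (Fin m) (Fin n) ℝ) (j : Fin n) : ℝ := vnorm fun a => A a j

lemma colNorm_nonneg (A : Matrix (Fin m) (Fin n) ℝ) (j : Fin n) : 0 ≤ colNorm A j := vnorm_nonneg _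

noncomputable def normalizeCols (A : Matrix (Fin m) (Fin n) ℝ) : Matrix (Fin m) (Fin n) ℝ :=
  of fun i j => A i j / colNorm A j

lemma colNorm_le_sval_one (A : Matrix (Fin m) (Fin n) ℝ) (j : Fin n) : colNorm A j ≤ sval A 1 := by
  have := vnorm_mulVec_le_sval_one A (Pi.single j 1)
  rwa [mulVec_single_one, vnorm_single, mul_one] at this

lemma sval_le_colNorm (A : Matrix (Fin m) (Fin n) ℝ) (j : Fin n) : sval A n ≤ colNorm A j := by
  have := sval_mul_vnorm_le A (Pi.single j 1)
  rwa [mulVec_single_one, vnorm_single, mul_one] at this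

lemma normalizeCols_eq_mul_diagonal (A : Matrix (Fin m) (Fin n) ℝ) :
    normalizeCols A = A * diagonal (colNorm A)⁻¹ := by
  ext i j
  simp [normalizeCols, div_eq_mul_inv]

lemma normalizeCols_mulVec (A : Matrix (Fin m) (Fin n) ℝ) (v : Fin n → ℝ) :
    normalizeCols A *ᵥ v = A *ᵥ ((colNorm A)⁻¹ * v) := by
  rw [normalizeCols_eq_mul_diagonal, ← mulVec_mulVec]
  congr 1
  ext j
  exact mulVec_diagonal _ _ j

lemma sval_one_normalizeCols_le {A : Matrix (Fin m) (Fin n) ℝ} (hA : 0 < sval A n) :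
    sval (normalizeCols A) 1 ≤ sval A 1 / sval A n := by
  refine sval_one_le _ (div_nonneg (sval_nonneg A 1) hA.le) fun v => ?_
  have hscale : vnorm ((colNorm A)⁻¹ * v) ≤ (sval A n)⁻¹ * vnorm v :=
    vnorm_mul_le (inv_nonneg.mpr hA.le) (fun j => by
      rw [Pi.inv_apply, abs_inv, abs_of_nonneg (colNorm_nonneg _ _)]
      exact inv_anti₀ hA (sval_le_colNorm A j)) v
  calc vnorm (normalizeCols A *ᵥ v) ≤ sval A 1 * vnorm ((colNorm A)⁻¹ * v) := by
        rw [normalizeCols_mulVec]; exact vnorm_mulVec_le_sval_one _ _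
  _ ≤ sval A 1 * ((sval A n)⁻¹ * vnorm v) := by gcongr; exact sval_nonneg A 1
  _ = sval A 1 / sval A n * vnorm v := by ring

lemma div_le_sval_normalizeCols (hn : n ≠ 0) {A : Matrix (Fin m) (Fin n) ℝ} (hA : 0 < sval A n) :
    sval A n / sval A 1 ≤ sval (normalizeCols A) n := by
  refine le_sval_of_forall hn _ (div_nonneg hA.le (sval_nonneg A 1)) fun v => ?_
  have hscale : (sval A 1)⁻¹ * vnorm v ≤ vnorm ((colNorm A)⁻¹ * v) :=
    mul_vnorm_le (inv_nonneg.mpr (sval_nonneg A 1)) (fun j => by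
      have hj := hA.trans_le (sval_le_colNorm A j)
      rw [Pi.inv_apply, abs_inv, abs_of_pos hj]
      exact inv_anti₀ hj (colNorm_le_sval_one A j)) v
  calc sval A n / sval A 1 * vnorm v = sval A n * ((sval A 1)⁻¹ * vnorm v) := by ring
  _ ≤ sval A n * vnorm ((colNorm A)⁻¹ * v) := by gcongr
  _ ≤ vnorm (normalizeCols A *ᵥ v) := by
        rw [normalizeCols_mulVec]; exact sval_mul_vnorm_le _ _

lemma inv_normalizeCols {V : Matrix (Fin n) (Fin n) ℝ} (hV : IsUnit V) (hcol : ∀ j, colNorm V j ≠ 0) :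
    (normalizeCols V)⁻¹ = diagonal (colNorm V) * V⁻¹ := by
  refine inv_eq_right_inv ?_
  rw [normalizeCols_eq_mul_diagonal, Matrix.mul_assoc, ← Matrix.mul_assoc (diagonal _),
    diagonal_mul_diagonal]
  simp only [Pi.inv_apply, inv_mul_cancel₀ (hcol _), diagonal_one, Matrix.one_mul]
  exact mul_nonsing_inv V ((isUnit_iff_isUnit_det V).mp hV)

lemma sval_one_inv_normalizeCols_le (hn : n ≠ 0) {V : Matrix (Fin n) (Fin n) ℝ} (hV : IsUnit V) :
    sval (normalizeCols V)⁻¹ 1 ≤ sval V 1 / sval V n := by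
  have hσ := sval_pos_of_isUnit hn hV
  have hVinv : V * V⁻¹ = 1 := mul_nonsing_inv V ((isUnit_iff_isUnit_det V).mp hV)
  rw [inv_normalizeCols hV fun j => (hσ.trans_le (sval_le_colNorm V j)).ne']
  refine sval_one_le _ (div_nonneg (sval_nonneg V 1) hσ.le) fun v => ?_
  have hinv : sval V n * vnorm (V⁻¹ *ᵥ v) ≤ vnorm v := by
    simpa [mulVec_mulVec, hVinv] using sval_mul_vnorm_le V (V⁻¹ *ᵥ v)
  calc vnorm ((diagonal (colNorm V) * V⁻¹) *ᵥ v) ≤ sval V 1 * vnorm (V⁻¹ *ᵥ v) := by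
        rw [← mulVec_mulVec, show diagonal (colNorm V) *ᵥ (V⁻¹ *ᵥ v) = colNorm V * (V⁻¹ *ᵥ v)
          from funext (mulVec_diagonal _ _)]
        exact vnorm_mul_le (sval_nonneg V 1) (fun j => by
          rw [abs_of_nonneg (colNorm_nonneg _ _)]; exact colNorm_le_sval_one V j) _
  _ ≤ sval V 1 * ((sval V n)⁻¹ * vnorm v) := by
        gcongr
        · exact sval_nonneg V 1
        · rwa [inv_mul_eq_div, le_div_iff₀ hσ, mul_comm]
  _ = sval V 1 / sval V n * vnorm v := by ring

/-- (Lemma "normalize-eig".) Let `V ∈ ℝ^{k×k}` be invertible and `R`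
the matrix whose `j`-th column is `V e_j / ‖V e_j‖₂`.  Then `‖R‖₂ ≤ κ(V)`,
`‖R⁻¹‖₂ ≤ κ(V)`, and `κ(R) ≤ κ(V)²`, where `κ(A) = σ_1(A)/σ_k(A)`. -/
theorem stmt_14 {k : ℕ} (V : Matrix (Fin k) (Fin k) ℝ) (hV : IsUnit V)
    (R : Matrix (Fin k) (Fin k) ℝ)
    (hR : ∀ i j, R i j = V i j / vnorm (fun a => V a j)) :
    sval R 1 ≤ sval V 1 / sval V k ∧
    sval R⁻¹ 1 ≤ sval V 1 / sval V k ∧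
    sval R 1 / sval R k ≤ (sval V 1 / sval V k) ^ 2 := by
  obtain rfl : R = normalizeCols V := Matrix.ext hR
  rcases Nat.eq_zero_or_pos k with rfl | hk
  · -- for `k = 0` every `σ_1` is `sSup ∅ = 0`
    simp [sval_eq_zero_of_lt _ zero_lt_one]
  have hσ := sval_pos_of_isUnit hk.ne' hV
  have hR1 := sval_one_normalizeCols_le hσ
  have hRk := div_le_sval_normalizeCols hk.ne' hσ
  have hV1 : 0 < sval V 1 := hσ.trans_le ((sval_le_colNorm V ⟨0, hk⟩).trans (colNorm_le_sval_one V _))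
  refine ⟨hR1, sval_one_inv_normalizeCols_le hk.ne' hV, ?_⟩
  calc sval (normalizeCols V) 1 / sval (normalizeCols V) k
      ≤ (sval V 1 / sval V k) / (sval V k / sval V 1) :=
        div_le_div₀ (div_nonneg hV1.le hσ.le) hR1 (div_pos hσ hV1) hRk
  _ = (sval V 1 / sval V k) ^ 2 := by field_simp
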